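/- arXiv:2206.14505 — 3 statements merged into one kernel-verified Lean document; each statement's English description precedes it below -/
import Mathlib

section
/- Let Sys be an SPA process tree and a an action. For every leaf P of Sys there exists exactly one a-scope of Sys whose set of leaves contains P; that is, the a-scopes of Sys partition its leaves. -/
/-!
An SPA system is modelled as a finite binary process tree: leaves are
sequential processes, each internal node is a parallel composition operator
labelled with a synchronisation set of actions.  Nodes (subtrees) of the tree
are identified with their positions, encoded as lists of Booleans (directions
from the root); a node `p` contains a node `q` iff `p` is a prefix of `q`.
-/

namespace SPA

/-- Binary process trees over a set of actions `Act`. -/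
inductive PTree (Act : Type) : Type
  | leaf : PTree Act
  | node : Set Act → PTree Act → PTree Act → PTree Act

variable {Act : Type}

/-- The subtree of a tree at a given position (if the position is valid). -/
def subtreeAt : PTree Act → List Bool → Option (PTree Act)
  | t, [] => some t
  | .leaf, _ :: _ => none
  | .node _ l r, b :: p => subtreeAt (if b then r else l) p

/-- `p` is a (valid position of a) node of `Sys`. -/
def IsNode (Sys : PTree Act) (p : List Bool) : Prop :=
  (subtreeAt Sys p).isSome

/-- `p` is a leaf of `Sys`, i.e. a sequential process. -/
def IsLeaf (Sys : PTree Act) (p : List Bool) : Prop :=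
  subtreeAt Sys p = some .leaf

/-- The node at position `p` is an internal node of type `||_a`
(its synchronisation set contains `a`). -/
def SyncAt (Sys : PTree Act) (p : List Bool) (a : Act) : Prop :=
  ∃ A l r, subtreeAt Sys p = some (.node A l r) ∧ a ∈ A

/-- The node at position `p` is an internal node of type `||_{¬a}`
(its synchronisation set does not contain `a`). -/
def NSyncAt (Sys : PTree Act) (p : List Bool) (a : Act) : Prop :=
  ∃ A l r, subtreeAt Sys p = some (.node A l r) ∧ a ∉ A

/-- Two nodes are disjoint iff neither subtree contains the other. -/
def DisjointNodes (p q : List Bool) : Prop :=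
  ¬ p <+: q ∧ ¬ q <+: p

/-- The longest common prefix of two positions: the join (lowest common
ancestor) of the two nodes, i.e. the root of the smallest subtree
containing both. -/
def lcp : List Bool → List Bool → List Bool
  | a :: as, b :: bs => if a = b then a :: lcp as bs else []
  | _, _ => []

/-- `q` lies strictly between `r` and `x` on the path from `r` down to `x`
(exclusive of both endpoints). -/
def StrictlyBetween (r x q : List Bool) : Prop :=
  r <+: q ∧ q <+: x ∧ q ≠ r ∧ q ≠ x

/-- The set of leaves of the subtree rooted at `p`. -/
def LeavesUnder (Sys : PTree Act) (p : List Bool) : Set (List Bool) :=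
  {q | p <+: q ∧ IsLeaf Sys q}


/-- An `a`-scope of `Sys`: either a subtree rooted at an internal node of type
`||_a`, or a single leaf, such that in either case every node strictly above it
(on the path to the root of `Sys`) is of type `||_{¬a}`. -/
def AScope (Sys : PTree Act) (a : Act) (p : List Bool) : Prop :=
  (SyncAt Sys p a ∨ IsLeaf Sys p) ∧
    ∀ q, q <+: p → q ≠ p → NSyncAt Sys q a

/-! The `a`-scope containing a leaf `P` is the first node on the path from the root to `P`
that is a leaf or of type `||_a`. Two `a`-scopes above `P` would be comparable, and the upper
one would then be a node strictly above the lower one, hence of type `||_{¬a}`, which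
neither a leaf nor a `||_a` node is. -/

theorem not_nSyncAt_of_syncAt_or_isLeaf {Sys : PTree Act} {p : List Bool} {a : Act}
    (h : SyncAt Sys p a ∨ IsLeaf Sys p) : ¬ NSyncAt Sys p a := by
  rintro ⟨A', l', r', h', ha'⟩
  rcases h with ⟨A, l, r, h, ha⟩ | h
  · obtain ⟨rfl, -, -⟩ := by simpa using h.symm.trans h'
    exact ha' ha
  · cases h.symm.trans h'

namespace AScope

variable {a : Act}

theorem nil {Sys : PTree Act} (h : SyncAt Sys [] a ∨ IsLeaf Sys []) : AScope Sys a [] :=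
  ⟨h, fun _ hq hne => absurd (List.prefix_nil.mp hq) hne⟩

theorem cons {A : Set Act} {l r : PTree Act} {b : Bool} {p : List Bool}
    (hp : AScope (if b then r else l) a p) (ha : a ∉ A) : AScope (.node A l r) a (b :: p) := by
  refine ⟨hp.1, ?_⟩
  rintro (_ | ⟨c, q⟩) hq hne
  · exact ⟨A, l, r, rfl, ha⟩
  · obtain ⟨rfl, hqp⟩ := List.cons_prefix_cons.mp hq
    exact hp.2 q hqp (by rintro rfl; exact hne rfl)

theorem eq_of_prefix {Sys : PTree Act} {p p' : List Bool}
    (hp : AScope Sys a p) (hp' : AScope Sys a p') (hpre : p <+: p') : p = p' := by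
  by_contra hne
  exact not_nSyncAt_of_syncAt_or_isLeaf hp.1 (hp'.2 p hpre hne)

end AScope

theorem exists_aScope_prefix_of_isLeaf (a : Act) {Sys : PTree Act} {P : List Bool}
    (hP : IsLeaf Sys P) : ∃ p, AScope Sys a p ∧ p <+: P := by
  induction Sys generalizing P with
  | leaf => exact ⟨[], AScope.nil (Or.inr rfl), List.nil_prefix⟩
  | node A l r ihl ihr =>
    by_cases ha : a ∈ A
    · exact ⟨[], AScope.nil (Or.inl ⟨A, l, r, rfl, ha⟩), List.nil_prefix⟩
    obtain _ | ⟨b, P⟩ := P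
    · cases hP
    obtain ⟨p, hp, hpP⟩ : ∃ p, AScope (if b then r else l) a p ∧ p <+: P := by
      cases b
      exacts [ihl hP, ihr hP]
    exact ⟨b :: p, hp.cons ha, List.cons_prefix_cons.mpr ⟨rfl, hpP⟩⟩

/-- For every leaf `P` of `Sys` there exists exactly one `a`-scope
of `Sys` whose set of leaves contains `P`: the `a`-scopes partition the leaves. -/
theorem ascope_partition (Sys : PTree Act) (a : Act) (P : List Bool)
    (hP : IsLeaf Sys P) :
    ∃! p, AScope Sys a p ∧ P ∈ LeavesUnder Sys p := by
  obtain ⟨p, hp, hpP⟩ := exists_aScope_prefix_of_isLeaf a hP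
  refine ⟨p, ⟨hp, hpP, hP⟩, ?_⟩
  rintro p' ⟨hp', hp'P, -⟩
  rcases List.prefix_or_prefix_of_prefix hp'P hpP with h | h
  · exact hp'.eq_of_prefix hp h
  · exact (hp.eq_of_prefix hp' h).symm

end SPA
end

section
/- Let Sys be an SPA process tree, a an action, B a nonempty a-synchronised set of leaves of Sys, and S the a-closure of B. If S contains at least two leaves, then the root r of the smallest subtree of Sys containing all leaves of S is an internal node of type ||_a. -/
/-!
An SPA system is modelled as a finite binary process tree: leaves are
sequential processes, each internal node is a parallel composition operator
labelled with a synchronisation set of actions.  Nodes (subtrees) of the tree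
are identified with their positions, encoded as lists of Booleans (directions
from the root); a node `p` contains a node `q` iff `p` is a prefix of `q`.
-/

namespace SPA

variable {Act : Type}

/-- A set `B` of leaves is `a`-synchronised: the join of every pair of distinct
leaves of `B` is of type `||_a`. -/
def ASynchronised (Sys : PTree Act) (a : Act) (B : Set (List Bool)) : Prop :=
  ∀ P ∈ B, ∀ Q ∈ B, P ≠ Q → SyncAt Sys (lcp P Q) a

/-- The `a`-closure of a set `B` of leaves: the least set containing `B` and
closed under the rule: if `P` is in the set and `Q` is a leaf distinct from `P`
whose join with `P` is of type `||_a`, then `Q` is in the set.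
(This models the Involved Set of a transition.) -/
inductive AClosure (Sys : PTree Act) (a : Act) (B : Set (List Bool)) : List Bool → Prop
  | base {P : List Bool} : P ∈ B → AClosure Sys a B P
  | step {P Q : List Bool} : AClosure Sys a B P → IsLeaf Sys Q → Q ≠ P →
      SyncAt Sys (lcp P Q) a → AClosure Sys a B Q

/-- `r` is the root of the smallest subtree containing all positions of `S`:
`r` is a common ancestor of all of `S`, and every common ancestor of all of `S`
contains the node `r`. -/
def IsJoinOf (S : Set (List Bool)) (r : List Bool) : Prop :=
  (∀ P ∈ S, r <+: P) ∧ ∀ q, (∀ P ∈ S, q <+: P) → q <+: r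

/-! Auxiliary lemmas -/

lemma lcp_prefix_left : ∀ x y : List Bool, lcp x y <+: x
  | [], _ => by simp [lcp]
  | _ :: _, [] => by simp [lcp]
  | a :: x, b :: y => by
    by_cases h : a = b
    · simpa [lcp, h] using lcp_prefix_left x y
    · simp [lcp, h]

lemma prefix_lcp : ∀ r x y : List Bool, r <+: x → r <+: y → r <+: lcp x y
  | [], _, _, _, _ => by simp
  | _ :: _, [], _, hx, _ => by simp at hx
  | _ :: _, _, [], _, hy => by simp at hy
  | c :: r, a :: x, b :: y, hx, hy => by
    obtain ⟨hca, hrx⟩ := (List.cons_prefix_cons).mp hx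
    obtain ⟨hcb, hry⟩ := (List.cons_prefix_cons).mp hy
    subst hca; subst hcb
    simpa [lcp, List.cons_prefix_cons] using prefix_lcp r x y hrx hry

lemma lcp_append_ne : ∀ (r : List Bool) {b c : Bool} (p q : List Bool), b ≠ c →
    lcp (r ++ b :: p) (r ++ c :: q) = r
  | [], b, c, p, q, h => by simp [lcp, h]
  | d :: r, b, c, p, q, h => by simp [lcp, lcp_append_ne r p q h]

lemma lcp_trichotomy : ∀ x y z : List Bool,
    lcp x z = lcp x y ∨ lcp x z = lcp y z ∨
      (lcp x y = lcp y z ∧ lcp x y <+: lcp x z)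
  | [], y, z => by left; simp [lcp]
  | a :: x, y, [] => by
    right; left
    cases y <;> simp [lcp]
  | a :: x, [], c :: z => by
    right; right; simp [lcp]
  | a :: x, b :: y, c :: z => by
    by_cases hac : a = c
    · by_cases hab : a = b
      · subst hac; subst hab
        rcases lcp_trichotomy x y z with h | h | ⟨h1, h2⟩
        · left; simp [lcp, h]
        · right; left; simp [lcp, h]
        · right; right
          exact ⟨by simp [lcp, h1], by simpa [lcp, List.cons_prefix_cons] using h2⟩
      · right; right
        have hbc : ¬ b = c := fun h => hab (hac ▸ h.symm)
        subst hac
        simp [lcp, hab, hbc]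
    · by_cases hab : a = b
      · right; left
        have hbc : ¬ b = c := fun h => hac (hab ▸ h)
        simp [lcp, hac, hbc]
      · left; simp [lcp, hac, hab]

lemma subtreeAt_append (Sys : PTree Act) :
    ∀ (p q : List Bool), subtreeAt Sys (p ++ q) =
      (subtreeAt Sys p).bind (fun t => subtreeAt t q) := by
  intro p
  induction p generalizing Sys with
  | nil => intro q; simp [subtreeAt]
  | cons b p ih =>
    intro q
    cases Sys with
    | leaf => simp [subtreeAt]
    | node A l r => simp [subtreeAt, ih]

lemma leaf_eq_of_prefix {Sys : PTree Act} {P Q : List Bool}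
    (hP : IsLeaf Sys P) (hQ : IsLeaf Sys Q) (hpre : P <+: Q) : Q = P := by
  obtain ⟨s, rfl⟩ := hpre
  cases s with
  | nil => simp
  | cons b s =>
    exfalso
    have := hQ
    rw [IsLeaf, subtreeAt_append, hP] at this
    simp [subtreeAt] at this

lemma aclosure_leaf {Sys : PTree Act} {a : Act} {B : Set (List Bool)}
    (hBleaf : ∀ P ∈ B, IsLeaf Sys P) {P : List Bool}
    (h : AClosure Sys a B P) : IsLeaf Sys P := by
  induction h with
  | base hP => exact hBleaf _ hP
  | step _ hQ _ _ _ => exact hQ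

lemma aclosure_invariant {Sys : PTree Act} {a : Act} {B : Set (List Bool)}
    (hBsync : ASynchronised Sys a B) {P₀ : List Bool} (hP₀ : P₀ ∈ B) :
    ∀ {Q : List Bool}, AClosure Sys a B Q → Q ≠ P₀ →
      ∃ R, AClosure Sys a B R ∧ lcp P₀ R <+: lcp P₀ Q ∧ SyncAt Sys (lcp P₀ R) a := by
  intro Q hQ
  induction hQ with
  | @base Q hQB =>
    intro hQP₀
    exact ⟨Q, .base hQB, List.prefix_refl _,
      hBsync P₀ hP₀ Q hQB (Ne.symm hQP₀)⟩
  | @step P Q hP hQleaf hQP hsync ih =>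
    intro hQP₀
    by_cases hPP₀ : P = P₀
    · subst hPP₀
      exact ⟨Q, .step hP hQleaf hQP hsync, List.prefix_refl _, hsync⟩
    · obtain ⟨R', hR'cl, hR'pre, hR'sync⟩ := ih hPP₀
      rcases lcp_trichotomy P₀ P Q with h | h | ⟨h1, h2⟩
      · exact ⟨R', hR'cl, h ▸ hR'pre, hR'sync⟩
      · exact ⟨Q, .step hP hQleaf hQP hsync, h ▸ List.prefix_refl _, h ▸ hsync⟩
      · exact ⟨R', hR'cl, hR'pre.trans h2, hR'sync⟩

/-- Let `B` be a nonempty `a`-synchronised set of leaves and `S`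
its `a`-closure.  If `S` contains at least two leaves, then the root `r` of the
smallest subtree containing all leaves of `S` is an internal node of type `||_a`. -/
theorem closure_root_sync (Sys : PTree Act) (a : Act) (B : Set (List Bool))
    (hBne : B.Nonempty) (hBleaf : ∀ P ∈ B, IsLeaf Sys P)
    (hBsync : ASynchronised Sys a B)
    (r : List Bool) (hr : IsJoinOf {P | AClosure Sys a B P} r)
    (htwo : ∃ P Q, AClosure Sys a B P ∧ AClosure Sys a B Q ∧ P ≠ Q) :
    SyncAt Sys r a := by
  obtain ⟨X, Y, hX, hY, hXY⟩ := htwo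
  -- every element of the closure strictly extends `r`
  have hstrict : ∀ P, AClosure Sys a B P → ∃ b s, P = r ++ b :: s := by
    intro P hP
    obtain ⟨s, rfl⟩ := hr.1 P hP
    cases s with
    | cons b s => exact ⟨b, s, rfl⟩
    | nil =>
      exfalso
      simp only [List.append_nil] at *
      rcases Classical.em (X = r) with hXr | hXr
      · subst hXr
        have h1 := leaf_eq_of_prefix (aclosure_leaf hBleaf hX)
          (aclosure_leaf hBleaf hY) (hr.1 Y hY)
        exact hXY h1.symm
      · have h1 := leaf_eq_of_prefix (aclosure_leaf hBleaf hP)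
          (aclosure_leaf hBleaf hX) (hr.1 X hX)
        exact hXr h1
  obtain ⟨P₀, hP₀⟩ := hBne
  have hP₀cl : AClosure Sys a B P₀ := .base hP₀
  obtain ⟨b₀, s₀, hP₀eq⟩ := hstrict P₀ hP₀cl
  -- there is an element of the closure on the other side of `r`
  have hother : ∃ Q s, AClosure Sys a B Q ∧ Q = r ++ (!b₀) :: s := by
    by_contra hcon
    push_neg at hcon
    have hall : ∀ P ∈ {P | AClosure Sys a B P}, r ++ [b₀] <+: P := by
      intro P hP
      obtain ⟨b, s, rfl⟩ := hstrict P hP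
      have hb : b = b₀ := by
        by_contra hb
        exact hcon _ s hP (by cases b <;> cases b₀ <;> simp_all)
      subst hb
      exact ⟨s, by simp⟩
    have := (hr.2 _ hall).length_le
    simp at this
  obtain ⟨Q, s, hQcl, hQeq⟩ := hother
  have hlcp : lcp P₀ Q = r := by
    rw [hP₀eq, hQeq]
    exact lcp_append_ne r s₀ s (by simp)
  have hQP₀ : Q ≠ P₀ := by
    rw [hP₀eq, hQeq]
    intro h
    have := (List.append_right_injective r).eq_iff.mp h
    simp at this
  obtain ⟨R, hRcl, hRpre, hRsync⟩ := aclosure_invariant hBsync hP₀ hQcl hQP₀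
  rw [hlcp] at hRpre
  have hrpre : r <+: lcp P₀ R := prefix_lcp r P₀ R (hr.1 P₀ hP₀cl) (hr.1 R hRcl)
  have : lcp P₀ R = r := hRpre.eq_of_length (le_antisymm hRpre.length_le hrpre.length_le)
  rwa [this] at hRsync

end SPA
end

section
/- Let Sys be an SPA process tree and a an action. Let S1 be the a-closure of a nonempty a-synchronised set B1 of leaves of Sys, and let S2 be the a-closure of a nonempty a-synchronised set B2 of leaves of Sys. If S1 ∩ S2 ≠ ∅, then S1 = S2. (For two flat transitions t1 and t2 with the same action label, if their Involved Sets intersect then the Involved Sets are equal.) -/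
/-!
An SPA system is modelled as a finite binary process tree: leaves are
sequential processes, each internal node is a parallel composition operator
labelled with a synchronisation set of actions.  Nodes (subtrees) of the tree
are identified with their positions, encoded as lists of Booleans (directions
from the root); a node `p` contains a node `q` iff `p` is a prefix of `q`.
-/

namespace SPA

variable {Act : Type}

theorem lcp_comm : ∀ (P Q : List Bool), lcp P Q = lcp Q P := by
  intro P
  induction P with
  | nil => intro Q; cases Q <;> rfl
  | cons a as ih =>
    intro Q
    cases Q with
    | nil => rfl
    | cons b bs =>
      simp only [lcp]
      by_cases h : a = b
      · subst h; simp [ih]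
      · simp [h, Ne.symm h]

/-- The symmetric one-step relation. -/
def Rel (Sys : PTree Act) (a : Act) (P Q : List Bool) : Prop :=
  IsLeaf Sys P ∧ IsLeaf Sys Q ∧ P ≠ Q ∧ SyncAt Sys (lcp P Q) a

theorem rel_symm {Sys : PTree Act} {a : Act} {P Q : List Bool}
    (h : Rel Sys a P Q) : Rel Sys a Q P := by
  obtain ⟨h1, h2, h3, h4⟩ := h
  exact ⟨h2, h1, Ne.symm h3, lcp_comm P Q ▸ h4⟩

theorem rtg_symm {Sys : PTree Act} {a : Act} {P Q : List Bool}
    (h : Relation.ReflTransGen (Rel Sys a) P Q) :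
    Relation.ReflTransGen (Rel Sys a) Q P := by
  induction h with
  | refl => exact .refl
  | tail _ hr ih => exact .trans (.single (rel_symm hr)) ih

theorem closure_leaf {Sys : PTree Act} {a : Act} {B : Set (List Bool)}
    (hB : ∀ P ∈ B, IsLeaf Sys P) {P : List Bool} (h : AClosure Sys a B P) :
    IsLeaf Sys P := by
  induction h with
  | base hP => exact hB _ hP
  | step _ hQ _ _ _ => exact hQ

theorem closure_iff {Sys : PTree Act} {a : Act} {B : Set (List Bool)}
    (hB : ∀ P ∈ B, IsLeaf Sys P) {Q : List Bool} :
    AClosure Sys a B Q ↔ ∃ b ∈ B, Relation.ReflTransGen (Rel Sys a) b Q := by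
  constructor
  · intro h
    induction h with
    | base hP => exact ⟨_, hP, .refl⟩
    | step hP hQ hne hs ih =>
      obtain ⟨b, hb, hr⟩ := ih
      exact ⟨b, hb, .tail hr ⟨closure_leaf hB hP, hQ, Ne.symm hne, hs⟩⟩
  · rintro ⟨b, hb, hr⟩
    induction hr with
    | refl => exact .base hb
    | tail _ hrel ih =>
      obtain ⟨h1, h2, h3, h4⟩ := hrel
      exact .step ih h2 (Ne.symm h3) h4

theorem base_connected {Sys : PTree Act} {a : Act} {B : Set (List Bool)}
    (hB : ∀ P ∈ B, IsLeaf Sys P) (hsync : ASynchronised Sys a B)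
    {b b' : List Bool} (hb : b ∈ B) (hb' : b' ∈ B) :
    Relation.ReflTransGen (Rel Sys a) b b' := by
  by_cases h : b = b'
  · exact h ▸ .refl
  · exact .single ⟨hB _ hb, hB _ hb', h, hsync _ hb _ hb' h⟩

theorem closure_subset {Sys : PTree Act} {a : Act} {B1 B2 : Set (List Bool)}
    (hB1leaf : ∀ P ∈ B1, IsLeaf Sys P)
    (hB2leaf : ∀ P ∈ B2, IsLeaf Sys P)
    (hB2sync : ASynchronised Sys a B2)
    {x : List Bool} (hx1 : AClosure Sys a B1 x) (hx2 : AClosure Sys a B2 x)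
    {y : List Bool} (hy : AClosure Sys a B2 y) : AClosure Sys a B1 y := by
  obtain ⟨b1, hb1, hr1⟩ := (closure_iff hB1leaf).1 hx1
  obtain ⟨b2, hb2, hr2⟩ := (closure_iff hB2leaf).1 hx2
  obtain ⟨b2', hb2', hr2'⟩ := (closure_iff hB2leaf).1 hy
  exact (closure_iff hB1leaf).2
    ⟨b1, hb1, hr1.trans ((rtg_symm hr2).trans
      ((base_connected hB2leaf hB2sync hb2 hb2').trans hr2'))⟩

/-- If the `a`-closures `S1` of `B1` and `S2` of `B2` (both
nonempty `a`-synchronised sets of leaves) intersect, then `S1 = S2`.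
(For two flat transitions with the same action label, intersecting Involved
Sets are equal.) -/
theorem closure_inter_nonempty_eq (Sys : PTree Act) (a : Act)
    (B1 B2 : Set (List Bool))
    (hB1ne : B1.Nonempty) (hB1leaf : ∀ P ∈ B1, IsLeaf Sys P)
    (hB1sync : ASynchronised Sys a B1)
    (hB2ne : B2.Nonempty) (hB2leaf : ∀ P ∈ B2, IsLeaf Sys P)
    (hB2sync : ASynchronised Sys a B2)
    (hmeet : ({P | AClosure Sys a B1 P} ∩ {P | AClosure Sys a B2 P}).Nonempty) :
    {P | AClosure Sys a B1 P} = {P | AClosure Sys a B2 P} := by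
  obtain ⟨x, hx1, hx2⟩ := hmeet
  ext y
  constructor
  · exact fun hy => closure_subset hB2leaf hB1leaf hB1sync hx2 hx1 hy
  · exact fun hy => closure_subset hB1leaf hB2leaf hB2sync hx1 hx2 hy

end SPA
end
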